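/- Let Γ be a weighted directed graph on a finite vertex set V and let λ ≠ 0 be an eigenvalue of the normalized Laplace operator Δ with |1 − λ| = r. Then Γ possesses a strongly connected component with at least two vertices that is both isolated and maximal (maximal means every vertex i of the component satisfies r(i) = r). -/

import Mathlib

/-- In-degree of vertex `i`: `d_i^in = ∑_j w_{ij}`. -/
noncomputable def din {V : Type*} [Fintype V] (w : V → V → ℝ) (i : V) : ℝ :=
  ∑ j, w i j

/-- The normalized Laplace operator of a weighted directed graph, as a complex matrix. -/
noncomputable def lap {V : Type*} [Fintype V] [DecidableEq V] (w : V → V → ℝ) :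
    Matrix V V ℂ :=
  Matrix.of fun i j =>
    if din w i = 0 then 0
    else (if i = j then 1 else 0) - ((w i j / din w i : ℝ) : ℂ)

/-- Eigenvalues of the normalized Laplacian, with algebraic multiplicity. -/
noncomputable def specL {V : Type*} [Fintype V] [DecidableEq V] (w : V → V → ℝ) :
    Multiset ℂ :=
  (lap w).charpoly.roots

/-- `r(i) = (∑_j |w_{ij}|)/|d_i^in|` if `d_i^in ≠ 0`, and `r(i) = 0` otherwise. -/
noncomputable def rfun {V : Type*} [Fintype V] (w : V → V → ℝ) (i : V) : ℝ :=
  if din w i = 0 then 0 else (∑ j, |w i j|) / |din w i|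

/-- `r = max_{i ∈ V} r(i)`. -/
noncomputable def rmax {V : Type*} [Fintype V] [Nonempty V] (w : V → V → ℝ) : ℝ :=
  Finset.univ.sup' Finset.univ_nonempty (rfun w)

/-- Vertex `j` reaches vertex `i` along directed edges. -/
def reaches {V : Type*} (w : V → V → ℝ) (j i : V) : Prop :=
  Relation.ReflTransGen (fun a b => w b a ≠ 0) j i

/-- `S` is a strongly connected component of `Γ`. -/
def IsSCC {V : Type*} (w : V → V → ℝ) (S : Finset V) : Prop :=
  S.Nonempty ∧ ∀ i ∈ S, ∀ j, j ∈ S ↔ (reaches w i j ∧ reaches w j i)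

/-!
Take an eigenvector `v` of `Δ` for `λ` and a vertex `i` where `|v|` is maximal, `|v i| = M`.
Since `λ ≠ 0`, `d_i^in ≠ 0`, and row `i` of `Δ v = λ v` reads `(1 - λ) v i = ∑_j (w_{ij}/d_i) v j`.
Taking norms, `r M = |1 - λ| M ≤ ∑_j |w_{ij}/d_i| |v j| ≤ r(i) M ≤ r M`, so equality holds
throughout: `r(i) = r` and every in-neighbour `j` of `i` again has `|v j| = M`. Hence the set of
vertices of maximal modulus is closed under taking predecessors, and a vertex of it with a
minimal set of ancestors lies in a source component; that component is isolated, maximal, and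
contains an in-neighbour of `i` other than `i` itself.
-/

open Finset Relation Matrix

theorem Matrix.exists_mulVec_eq_smul_of_mem_roots_charpoly {R n : Type*} [CommRing R] [IsDomain R]
    [Fintype n] [DecidableEq n] {A : Matrix n n R} {μ : R} (h : μ ∈ A.charpoly.roots) :
    ∃ v : n → R, v ≠ 0 ∧ A *ᵥ v = μ • v := by
  have hμ : Module.End.HasEigenvalue (toLin' A) μ := by
    rw [Module.End.hasEigenvalue_iff_isRoot_charpoly, charpoly_toLin']
    exact Polynomial.isRoot_of_mem_roots h
  obtain ⟨v, hv⟩ := hμ.exists_hasEigenvector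
  exact ⟨v, hv.2, by simpa using hv.apply_eq_smul⟩

section WeightedTriangle

variable {ι 𝕜 E : Type*} [Fintype ι] [NormedField 𝕜] [SeminormedAddCommGroup E]
  [NormedSpace 𝕜 E] {c : ι → 𝕜} {x : ι → E} {M : ℝ}

theorem norm_sum_smul_le_sum_norm_mul (hx : ∀ j, ‖x j‖ ≤ M) :
    ‖∑ j, c j • x j‖ ≤ (∑ j, ‖c j‖) * M :=
  calc ‖∑ j, c j • x j‖ ≤ ∑ j, ‖c j‖ * ‖x j‖ := by
        simpa only [norm_smul] using norm_sum_le univ fun j => c j • x j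
    _ ≤ ∑ j, ‖c j‖ * M := by gcongr; exact hx _
    _ = (∑ j, ‖c j‖) * M := (sum_mul ..).symm

theorem norm_eq_of_sum_norm_mul_le_norm_sum_smul (hx : ∀ j, ‖x j‖ ≤ M)
    (h : (∑ j, ‖c j‖) * M ≤ ‖∑ j, c j • x j‖) {j : ι} (hj : c j ≠ 0) : ‖x j‖ = M := by
  have hterm : ∀ k ∈ univ, ‖c k‖ * ‖x k‖ ≤ ‖c k‖ * M := fun k _ => by gcongr; exact hx k
  have hsum : ∑ k, ‖c k‖ * ‖x k‖ = ∑ k, ‖c k‖ * M := by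
    refine le_antisymm (sum_le_sum hterm) ?_
    calc ∑ k, ‖c k‖ * M = (∑ k, ‖c k‖) * M := (sum_mul ..).symm
      _ ≤ ‖∑ k, c k • x k‖ := h
      _ ≤ ∑ k, ‖c k‖ * ‖x k‖ := by
        simpa only [norm_smul] using norm_sum_le univ fun k => c k • x k
  exact mul_left_cancel₀ (norm_ne_zero_iff.2 hj)
    ((sum_eq_sum_iff_of_le hterm).1 hsum j (mem_univ j))

end WeightedTriangle

theorem ne_zero_of_forall_norm_le {ι E : Type*} [NormedAddGroup E] {v : ι → E} {i : ι}
    (hv0 : v ≠ 0) (hmax : ∀ j, ‖v j‖ ≤ ‖v i‖) : v i ≠ 0 := by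
  intro hvi
  refine hv0 (funext fun j => norm_le_zero_iff.1 ?_)
  simpa [hvi] using hmax j

section SourceComponent

variable {α : Type*} {r : α → α → Prop} {P : α → Prop}

theorem Relation.ReflTransGen.of_forall_head (hP : ∀ a b, r a b → P b → P a) {a b : α}
    (hab : ReflTransGen r a b) (hb : P b) : P a := by
  induction hab using ReflTransGen.head_induction_on with
  | refl => exact hb
  | head hac _ ih => exact hP _ _ hac ih

theorem Relation.exists_forall_reflTransGen_of_forall_head [Finite α] (hne : ∃ a, P a)
    (hP : ∀ a b, r a b → P b → P a) :
    ∃ i, P i ∧ ∀ j, ReflTransGen r j i → ReflTransGen r i j := by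
  obtain ⟨i, hi, hmin⟩ := (Set.toFinite {a | P a}).exists_minimalFor
    (fun a => {k | ReflTransGen r k a}) _ hne
  refine ⟨i, hi, fun j hji => ?_⟩
  have hanc : {k | ReflTransGen r k j} ⊆ {k | ReflTransGen r k i} := fun k hkj => hkj.trans hji
  exact hmin (hji.of_forall_head hP hi) hanc (ReflTransGen.refl : ReflTransGen r i i)

end SourceComponent

section StronglyConnectedComponent

variable {V : Type*} [Fintype V] {w : V → V → ℝ} {i : V}

open Classical in
noncomputable def scc (w : V → V → ℝ) (i : V) : Finset V :=
  {k | reaches w i k ∧ reaches w k i}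

theorem mem_scc {k : V} : k ∈ scc w i ↔ reaches w i k ∧ reaches w k i := by
  simp [scc]

theorem isSCC_scc (w : V → V → ℝ) (i : V) : IsSCC w (scc w i) := by
  refine ⟨⟨i, mem_scc.2 ⟨.refl, .refl⟩⟩, fun a ha j => ?_⟩
  obtain ⟨hia, hai⟩ := mem_scc.1 ha
  refine ⟨fun hj => ?_, fun ⟨haj, hja⟩ => mem_scc.2 ⟨hia.trans haj, hja.trans hai⟩⟩
  obtain ⟨hij, hji⟩ := mem_scc.1 hj
  exact ⟨hai.trans hij, hji.trans hia⟩

theorem scc_isolated (hsrc : ∀ j, reaches w j i → reaches w i j) :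
    ∀ a ∈ scc w i, ∀ j ∉ scc w i, w a j = 0 := by
  intro a ha j hj
  by_contra hwaj
  have hji : reaches w j i := (ReflTransGen.single hwaj).trans (mem_scc.1 ha).2
  exact hj (mem_scc.2 ⟨hsrc j hji, hji⟩)

theorem two_le_card_scc (hloop : w i i = 0) (hsrc : ∀ j, reaches w j i → reaches w i j)
    (hd : din w i ≠ 0) : 2 ≤ (scc w i).card := by
  obtain ⟨j, hj⟩ : ∃ j, w i j ≠ 0 := by
    by_contra! h
    exact hd (by simp [din, h])
  have hji : reaches w j i := ReflTransGen.single hj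
  refine one_lt_card.2 ⟨i, mem_scc.2 ⟨.refl, .refl⟩, j, mem_scc.2 ⟨hsrc j hji, hji⟩, ?_⟩
  rintro rfl
  exact hj hloop

end StronglyConnectedComponent

section MaximalModulus

variable {V : Type*} [Fintype V] {w : V → V → ℝ} {lam : ℂ} {v : V → ℂ} {i : V}

theorem rfun_eq_sum_norm (hd : din w i ≠ 0) : rfun w i = ∑ j, ‖w i j / din w i‖ := by
  simp only [rfun, hd, if_false, Real.norm_eq_abs, abs_div, sum_div]

variable [DecidableEq V]

theorem lap_mulVec_apply_of_din_eq_zero (v : V → ℂ) (hd : din w i = 0) :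
    (lap w *ᵥ v) i = 0 := by
  simp [lap, mulVec, dotProduct, hd]

theorem lap_mulVec_apply (v : V → ℂ) (hd : din w i ≠ 0) :
    (lap w *ᵥ v) i = v i - ∑ j, (w i j / din w i) • v j := by
  simp [lap, mulVec, dotProduct, hd, sub_mul, sum_sub_distrib, Complex.real_smul]

theorem din_ne_zero_of_mulVec_eq_smul (hv : lap w *ᵥ v = lam • v) (hne : lam ≠ 0)
    (hvi : v i ≠ 0) : din w i ≠ 0 := by
  intro hd
  have := congrFun hv i
  rw [lap_mulVec_apply_of_din_eq_zero v hd, Pi.smul_apply, smul_eq_mul] at this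
  exact mul_ne_zero hne hvi this.symm

variable [Nonempty V]

theorem rmax_mul_norm_le_norm_sum (hv : lap w *ᵥ v = lam • v) (habs : ‖1 - lam‖ = rmax w)
    (hd : din w i ≠ 0) : rmax w * ‖v i‖ ≤ ‖∑ j, (w i j / din w i) • v j‖ := by
  have hrow : ∑ j, (w i j / din w i) • v j = (1 - lam) * v i := by
    have := congrFun hv i
    rw [lap_mulVec_apply v hd, Pi.smul_apply, smul_eq_mul] at this
    linear_combination -this
  rw [hrow, norm_mul, habs]

variable (hv0 : v ≠ 0) (hv : lap w *ᵥ v = lam • v) (hne : lam ≠ 0) (habs : ‖1 - lam‖ = rmax w)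
  (hmax : ∀ j, ‖v j‖ ≤ ‖v i‖)
include hv0 hv hne habs hmax

theorem rfun_eq_rmax_of_forall_norm_le : rfun w i = rmax w := by
  have hvi := ne_zero_of_forall_norm_le hv0 hmax
  have hd := din_ne_zero_of_mulVec_eq_smul hv hne hvi
  refine le_antisymm (le_sup' (rfun w) (mem_univ i))
    (le_of_mul_le_mul_right ?_ (norm_pos_iff.2 hvi))
  calc rmax w * ‖v i‖ ≤ ‖∑ j, (w i j / din w i) • v j‖ := rmax_mul_norm_le_norm_sum hv habs hd
    _ ≤ rfun w i * ‖v i‖ := by rw [rfun_eq_sum_norm hd]; exact norm_sum_smul_le_sum_norm_mul hmax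

theorem norm_eq_of_weight_ne_zero {j : V} (hj : w i j ≠ 0) : ‖v j‖ = ‖v i‖ := by
  have hd := din_ne_zero_of_mulVec_eq_smul hv hne (ne_zero_of_forall_norm_le hv0 hmax)
  refine norm_eq_of_sum_norm_mul_le_norm_sum_smul (c := fun k => w i k / din w i) hmax ?_
    (div_ne_zero hj hd)
  rw [← rfun_eq_sum_norm hd, rfun_eq_rmax_of_forall_norm_le hv0 hv hne habs hmax]
  exact rmax_mul_norm_le_norm_sum hv habs hd

end MaximalModulus

/-- if `λ ≠ 0` is an eigenvalue of `Δ` with `|1 - λ| = r`, then `Γ` has a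
strongly connected component with at least two vertices that is isolated and maximal
(every vertex `i` of the component satisfies `r(i) = r`). -/
theorem extremal_eigenvalue_maximal_isolated_scc {V : Type*} [Fintype V] [DecidableEq V]
    [Nonempty V] (w : V → V → ℝ) (hloop : ∀ i, w i i = 0)
    (lam : ℂ) (hne : lam ≠ 0) (hev : lam ∈ specL w)
    (habs : ‖1 - lam‖ = rmax w) :
    ∃ S : Finset V, IsSCC w S ∧ 2 ≤ S.card ∧
      (∀ i ∈ S, ∀ j ∉ S, w i j = 0) ∧
      (∀ i ∈ S, rfun w i = rmax w) := by
  obtain ⟨v, hv0, hv⟩ := Matrix.exists_mulVec_eq_smul_of_mem_roots_charpoly hev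
  obtain ⟨m, hm⟩ := Finite.exists_max fun j => ‖v j‖
  set P : V → Prop := fun k => ‖v k‖ = ‖v m‖
  have hmax : ∀ k, P k → ∀ j, ‖v j‖ ≤ ‖v k‖ := fun k hk => hk ▸ hm
  have hclosed : ∀ a b, w b a ≠ 0 → P b → P a := fun a b hba hb =>
    (norm_eq_of_weight_ne_zero hv0 hv hne habs (hmax b hb) hba).trans hb
  obtain ⟨i, hi, hsrc⟩ := exists_forall_reflTransGen_of_forall_head (P := P) ⟨m, rfl⟩ hclosed
  have hd := din_ne_zero_of_mulVec_eq_smul hv hne (ne_zero_of_forall_norm_le hv0 (hmax i hi))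
  refine ⟨scc w i, isSCC_scc w i, two_le_card_scc (hloop i) hsrc hd, scc_isolated hsrc,
    fun a ha => rfun_eq_rmax_of_forall_norm_le hv0 hv hne habs (hmax a ?_)⟩
  exact (mem_scc.1 ha).2.of_forall_head hclosed hi
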